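/- If Q = s(n⊗n − (1/3)I) is a C² uniaxial tensor field with |n| ≡ 1 satisfying L ΔQᵢⱼ = (1/3)(2c²s² − b²s − 3a²)Qᵢⱼ at a point where s ≠ 0, then at that point 2(∂ₖs)(∂ₖnⱼ) + sΔnⱼ + s|∇n|²nⱼ = 0 for j = 1,2,3, equivalently ∂ₖ(s²∂ₖnⱼ) + s²|∇n|²nⱼ = 0. -/

import Mathlib

/-- Partial derivative in direction `k` of a function on `ℝ³ = Fin 3 → ℝ`. -/
noncomputable def pd (k : Fin 3) (f : (Fin 3 → ℝ) → ℝ) (x : Fin 3 → ℝ) : ℝ :=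
  fderiv ℝ f x (Pi.single k 1)

/-- Laplacian of a function on `ℝ³`. -/
noncomputable def lap (f : (Fin 3 → ℝ) → ℝ) (x : Fin 3 → ℝ) : ℝ :=
  ∑ k, pd k (fun y => pd k f y) x

/-
Contract `L ΔQᵢⱼ = μ Qᵢⱼ` with `nⱼ`. Differentiating `|n|² = 1` once and twice gives `n·∂ₖn = 0`
and `n·Δn = -|∇n|²`, with which the contraction reads `L (α nᵢ + Tᵢ) = β nᵢ` for scalars `α, β`,
where `T` is the vector on the left of the first claim. The same two identities give `n·T = 0`, so
`T` is a multiple of the unit vector `n` orthogonal to it, i.e. `T = 0`. The divergence form of the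
equation is `s T = 0`.
-/

open Finset

lemma eq_zero_of_sum_mul_eq_zero_of_mul_add_eq {ι : Type*} [Fintype ι] {u v : ι → ℝ}
    {L α β : ℝ} (hL : L ≠ 0) (hu : ∑ i, u i * u i = 1) (huv : ∑ i, u i * v i = 0)
    (h : ∀ i, L * (α * u i + v i) = β * u i) (i : ι) : v i = 0 := by
  have hβ : β = L * α := calc
    β = ∑ i, β * (u i * u i) := by rw [← mul_sum, hu, mul_one]
    _ = ∑ i, ((L * α) * (u i * u i) + L * (u i * v i)) := by
      congr! 1 with i; linear_combination -u i * h i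
    _ = L * α := by rw [sum_add_distrib, ← mul_sum, ← mul_sum, hu, huv]; ring
  have hLv : L * v i = 0 := by linear_combination h i + u i * hβ
  exact (mul_eq_zero.mp hLv).resolve_left hL

lemma sum_mul_mul_mul_sub_ite {ι : Type*} [Fintype ι] [DecidableEq ι] {u : ι → ℝ}
    (hu : ∑ j, u j * u j = 1) (a c : ℝ) (i : ι) :
    ∑ j, u j * (a * (u i * u j - if i = j then c else 0)) = (1 - c) * a * u i := by
  have h : ∑ j, u j * (a * (u i * u j)) = a * u i * ∑ j, u j * u j := by
    rw [mul_sum]; congr! 1; ring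
  simp only [mul_sub, mul_ite, mul_zero, sum_sub_distrib, sum_ite_eq, mem_univ, if_true, h, hu]
  ring

section Calculus

variable {f g : (Fin 3 → ℝ) → ℝ} {k : Fin 3} {x : Fin 3 → ℝ}

lemma pd_const (k : Fin 3) (c : ℝ) (x : Fin 3 → ℝ) : pd k (fun _ => c) x = 0 := by
  simp [pd]

lemma pd_add (hf : DifferentiableAt ℝ f x) (hg : DifferentiableAt ℝ g x) :
    pd k (fun y => f y + g y) x = pd k f x + pd k g x := by
  simp [pd, fderiv_fun_add hf hg]

lemma pd_sub_const (c : ℝ) : pd k (fun y => f y - c) x = pd k f x := by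
  simp [pd, fderiv_sub_const]

lemma pd_mul (hf : DifferentiableAt ℝ f x) (hg : DifferentiableAt ℝ g x) :
    pd k (fun y => f y * g y) x = pd k f x * g x + f x * pd k g x := by
  simp [pd, fderiv_fun_mul hf hg]
  ring

lemma pd_sum {ι : Type*} {s : Finset ι} {F : ι → (Fin 3 → ℝ) → ℝ}
    (hF : ∀ i ∈ s, DifferentiableAt ℝ (F i) x) :
    pd k (fun y => ∑ i ∈ s, F i y) x = ∑ i ∈ s, pd k (F i) x := by
  simp [pd, fderiv_fun_sum hF]

lemma ContDiff.differentiable_pd (hf : ContDiff ℝ 2 f) (k : Fin 3) :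
    Differentiable ℝ (pd k f) :=
  ((hf.fderiv_right (m := 1) (by norm_num)).clm_apply contDiff_const).differentiable
    one_ne_zero

lemma lap_sub_const (c : ℝ) : lap (fun y => f y - c) x = lap f x := by
  simp only [lap, pd_sub_const]

lemma lap_mul (hf : ContDiff ℝ 2 f) (hg : ContDiff ℝ 2 g) (x : Fin 3 → ℝ) :
    lap (fun y => f y * g y) x
      = lap f x * g x + 2 * ∑ k, pd k f x * pd k g x + f x * lap g x := by
  have hf₁ := hf.differentiable two_ne_zero
  have hg₁ := hg.differentiable two_ne_zero
  have hk : ∀ k, pd k (fun y => pd k (fun z => f z * g z) y) x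
      = pd k (pd k f) x * g x + 2 * (pd k f x * pd k g x) + f x * pd k (pd k g) x := by
    intro k
    have hf₂ := hf.differentiable_pd k
    have hg₂ := hg.differentiable_pd k
    simp only [pd_mul (hf₁ _) (hg₁ _)]
    rw [pd_add (f := fun y => pd k f y * g y) (g := fun y => f y * pd k g y)
      ((hf₂ x).mul (hg₁ x)) ((hf₁ x).mul (hg₂ x)), pd_mul (hf₂ x) (hg₁ x),
      pd_mul (hf₁ x) (hg₂ x)]
    ring
  simp only [lap, hk, sum_add_distrib, ← sum_mul, ← mul_sum]

lemma lap_mul_mul_sub_const {f g h : (Fin 3 → ℝ) → ℝ} (hf : ContDiff ℝ 2 f)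
    (hg : ContDiff ℝ 2 g) (hh : ContDiff ℝ 2 h) (c : ℝ) (x : Fin 3 → ℝ) :
    lap (fun y => f y * (g y * h y - c)) x
      = lap f x * (g x * h x - c) + 2 * ∑ k, pd k f x * (pd k g x * h x + g x * pd k h x)
        + f x * (lap g x * h x + 2 * ∑ k, pd k g x * pd k h x + g x * lap h x) := by
  have hgh := hg.mul hh
  rw [lap_mul hf (hgh.sub contDiff_const), lap_sub_const, lap_mul hg hh]
  simp only [pd_sub_const, pd_mul (hg.differentiable two_ne_zero x)
    (hh.differentiable two_ne_zero x)]

lemma sum_pd_sq_mul_pd {s f : (Fin 3 → ℝ) → ℝ} (hs : Differentiable ℝ s) (hf : ContDiff ℝ 2 f)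
    (x : Fin 3 → ℝ) :
    ∑ k, pd k (fun y => s y ^ 2 * pd k f y) x
      = s x * (2 * ∑ k, pd k s x * pd k f x + s x * lap f x) := by
  have hs₂ : Differentiable ℝ fun y => s y ^ 2 := hs.pow 2
  simp only [pd_mul (f := fun y => s y ^ 2) (hs₂ x) (hf.differentiable_pd _ x), lap, mul_sum,
    ← sum_add_distrib]
  congr! 1 with k
  rw [show (fun y => s y ^ 2) = fun y => s y * s y by ext; ring, pd_mul (hs x) (hs x)]
  ring

end Calculus

noncomputable def gradNormSq {ι : Type*} [Fintype ι] (n : ι → (Fin 3 → ℝ) → ℝ)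
    (x : Fin 3 → ℝ) : ℝ :=
  ∑ j, ∑ k, pd k (n j) x ^ 2

section UnitVectorField

variable {ι : Type*} [Fintype ι] {n : ι → (Fin 3 → ℝ) → ℝ}

lemma sum_mul_pd_eq_zero_of_unit (hn : ∀ j, Differentiable ℝ (n j))
    (hunit : ∀ y, ∑ j, n j y * n j y = 1) (k : Fin 3) (x : Fin 3 → ℝ) :
    ∑ j, n j x * pd k (n j) x = 0 := by
  have h := pd_const k 1 x
  rw [← funext hunit,
    pd_sum (F := fun j y => n j y * n j y) fun j _ => ((hn j).mul (hn j)) x] at h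
  simp only [pd_mul (hn _ x) (hn _ x), mul_comm (pd k _ x), ← two_mul, ← mul_sum] at h
  simpa using h

lemma sum_mul_lap_eq_neg_of_unit (hn : ∀ j, ContDiff ℝ 2 (n j))
    (hunit : ∀ y, ∑ j, n j y * n j y = 1) (x : Fin 3 → ℝ) :
    ∑ j, n j x * lap (n j) x = -gradNormSq n x := by
  have hn₁ j := (hn j).differentiable two_ne_zero
  have hk k : ∑ j, (pd k (n j) x ^ 2 + n j x * pd k (fun y => pd k (n j) y) x) = 0 := by
    have h := pd_const k 0 x
    rw [← funext (sum_mul_pd_eq_zero_of_unit hn₁ hunit k),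
      pd_sum (F := fun j y => n j y * pd k (n j) y)
        fun j _ => ((hn₁ j).mul ((hn j).differentiable_pd k)) x] at h
    simpa only [pd_mul (hn₁ _ x) ((hn _).differentiable_pd k x), sq] using h
  have := sum_eq_zero fun k (_ : k ∈ univ) => hk k
  rw [sum_comm] at this
  simp only [lap, gradNormSq, mul_sum, sum_add_distrib] at this ⊢
  linear_combination this

end UnitVectorField

/-- `s⁻¹ (∂ₖ(s² ∂ₖnⱼ) + s² |∇n|² nⱼ)`: the Euler–Lagrange operator of the director energy
`∫ s² |∇n|²` under the constraint `|n| = 1`, divided by `s`. -/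
noncomputable def weightedTension (s : (Fin 3 → ℝ) → ℝ) (n : Fin 3 → (Fin 3 → ℝ) → ℝ)
    (x : Fin 3 → ℝ) (j : Fin 3) : ℝ :=
  2 * ∑ k, pd k s x * pd k (n j) x + s x * lap (n j) x + s x * gradNormSq n x * n j x

section Uniaxial

variable {s : (Fin 3 → ℝ) → ℝ} {n : Fin 3 → (Fin 3 → ℝ) → ℝ}

lemma sum_mul_weightedTension_eq_zero (hn : ∀ j, ContDiff ℝ 2 (n j))
    (hunit : ∀ y, ∑ j, n j y * n j y = 1) (x : Fin 3 → ℝ) :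
    ∑ j, n j x * weightedTension s n x j = 0 := by
  have hD k := sum_mul_pd_eq_zero_of_unit (fun j => (hn j).differentiable two_ne_zero) hunit k x
  have hΔ := sum_mul_lap_eq_neg_of_unit hn hunit x
  have hN := hunit x
  simp only [weightedTension, Fin.sum_univ_three] at hD hΔ hN ⊢
  linear_combination 2 * pd 0 s x * hD 0 + 2 * pd 1 s x * hD 1 + 2 * pd 2 s x * hD 2
    + s x * hΔ + s x * gradNormSq n x * hN

lemma sum_mul_lap_uniaxial (hs : ContDiff ℝ 2 s) (hn : ∀ j, ContDiff ℝ 2 (n j))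
    (hunit : ∀ y, ∑ j, n j y * n j y = 1) (c : ℝ) (i : Fin 3) (x : Fin 3 → ℝ) :
    ∑ j, n j x * lap (fun y => s y * (n i y * n j y - if i = j then c else 0)) x
      = ((1 - c) * lap s x - 2 * s x * gradNormSq n x) * n i x + weightedTension s n x i := by
  simp only [lap_mul_mul_sub_const hs (hn i) (hn _)]
  have hδ : ∑ j, n j x * (if i = j then c else 0) = c * n i x := by
    simp [mul_comm]
  have hD k := sum_mul_pd_eq_zero_of_unit (fun j => (hn j).differentiable two_ne_zero) hunit k x
  have hΔ := sum_mul_lap_eq_neg_of_unit hn hunit x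
  have hN := hunit x
  simp only [weightedTension, Fin.sum_univ_three] at hδ hD hΔ hN ⊢
  linear_combination (lap s x * n i x + 2 * (pd 0 s x * pd 0 (n i) x + pd 1 s x * pd 1 (n i) x
      + pd 2 s x * pd 2 (n i) x) + s x * lap (n i) x) * hN - lap s x * hδ
    + 2 * (pd 0 s x * n i x + s x * pd 0 (n i) x) * hD 0
    + 2 * (pd 1 s x * n i x + s x * pd 1 (n i) x) * hD 1
    + 2 * (pd 2 s x * n i x + s x * pd 2 (n i) x) * hD 2 + s x * n i x * hΔ

end Uniaxial

theorem stmt_12_general (L a2 b2 c2 : ℝ) (hL : 0 < L)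
    (s : (Fin 3 → ℝ) → ℝ) (n : Fin 3 → (Fin 3 → ℝ) → ℝ)
    (hsC2 : ContDiff ℝ 2 s) (hnC2 : ∀ j, ContDiff ℝ 2 (n j))
    (hunit : ∀ y, (∑ j, n j y * n j y) = 1)
    (Q : Fin 3 → Fin 3 → (Fin 3 → ℝ) → ℝ)
    (hQ : ∀ i j y, Q i j y = s y * (n i y * n j y - (if i = j then (1:ℝ)/3 else 0)))
    (x : Fin 3 → ℝ)
    (heq : ∀ i j, L * lap (Q i j) x =
      (1/3) * (2 * c2 * (s x) ^ 2 - b2 * s x - 3 * a2) * Q i j x) :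
    (∀ j, 2 * (∑ k, pd k s x * pd k (n j) x) + s x * lap (n j) x +
        s x * (∑ j', ∑ k, (pd k (n j') x) ^ 2) * n j x = 0) ∧
    (∀ j, (∑ k, pd k (fun y => (s y) ^ 2 * pd k (n j) y) x) +
        (s x) ^ 2 * (∑ j', ∑ k, (pd k (n j') x) ^ 2) * n j x = 0) := by
  obtain rfl : Q = fun i j y => s y * (n i y * n j y - if i = j then 1 / 3 else 0) := by
    ext i j y; exact hQ i j y
  set μ := (1/3) * (2 * c2 * (s x) ^ 2 - b2 * s x - 3 * a2)
  have hT : ∀ j, weightedTension s n x j = 0 := by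
    refine eq_zero_of_sum_mul_eq_zero_of_mul_add_eq
      (α := (1 - 1/3) * lap s x - 2 * s x * gradNormSq n x) (β := μ * ((1 - 1/3) * s x))
      hL.ne' (hunit x)
      (sum_mul_weightedTension_eq_zero hnC2 hunit x) fun i => ?_
    rw [← sum_mul_lap_uniaxial hsC2 hnC2 hunit (1/3) i x, mul_sum]
    simp only [mul_left_comm L, heq, mul_left_comm _ μ, ← mul_sum]
    rw [sum_mul_mul_mul_sub_ite (hunit x)]
    ring
  refine ⟨hT, fun j => ?_⟩
  rw [sum_pd_sq_mul_pd (hsC2.differentiable two_ne_zero) (hnC2 j)]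
  have h := hT j
  unfold weightedTension gradNormSq at h
  linear_combination s x * h

theorem stmt_12 (L a2 b2 c2 : ℝ) (hL : 0 < L) (ha : 0 < a2) (hb : 0 < b2) (hc : 0 < c2)
    (s : (Fin 3 → ℝ) → ℝ) (n : Fin 3 → (Fin 3 → ℝ) → ℝ)
    (hsC2 : ContDiff ℝ 2 s) (hnC2 : ∀ j, ContDiff ℝ 2 (n j))
    (hunit : ∀ y, (∑ j, n j y * n j y) = 1)
    (Q : Fin 3 → Fin 3 → (Fin 3 → ℝ) → ℝ)
    (hQ : ∀ i j y, Q i j y = s y * (n i y * n j y - (if i = j then (1:ℝ)/3 else 0)))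
    (x : Fin 3 → ℝ) (hsx : s x ≠ 0)
    (heq : ∀ i j, L * lap (Q i j) x =
      (1/3) * (2 * c2 * (s x) ^ 2 - b2 * s x - 3 * a2) * Q i j x) :
    (∀ j, 2 * (∑ k, pd k s x * pd k (n j) x) + s x * lap (n j) x +
        s x * (∑ j', ∑ k, (pd k (n j') x) ^ 2) * n j x = 0) ∧
    (∀ j, (∑ k, pd k (fun y => (s y) ^ 2 * pd k (n j) y) x) +
        (s x) ^ 2 * (∑ j', ∑ k, (pd k (n j') x) ^ 2) * n j x = 0) :=
  stmt_12_general L a2 b2 c2 hL s n hsC2 hnC2 hunit Q hQ x heq
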